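/- Let K = ℚ(q), let [k]_q = 1 + q + ⋯ + q^{k-1}, and define log_χ(T) = Σ_{k≥1} ([k]_q / k)·T^k ∈ K⟦T⟧ and exp_χ(T) = (E(T) - 1)·(E(T) - q)^{-1} ∈ K⟦T⟧ with E(T) = exp((1-q)·T). In K⟦X,Y⟧ the element 1 - q·X·Y is a unit; define G(X,Y) = (X + Y - (1+q)·X·Y)·(1 - q·X·Y)^{-1}. Then exp_χ(log_χ(X) + log_χ(Y)) = G(X,Y) in K⟦X,Y⟧; equivalently, log_χ(G(X,Y)) = log_χ(X) + log_χ(Y), i.e. log_χ is a logarithm for the formal group law G. -/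

import Mathlib

/-!
Put `ℓ(T) = Σ_{k ≥ 1} T^k / k = -log(1 - T)`. Since `(1 - q)[k]_q = 1 - q^k`, we have
`(1 - q)·log_χ(T) = ℓ(T) - ℓ(qT)`, hence `E(log_χ(T)) = (1 - qT)/(1 - T)`; equivalently,
`E(log_χ(T))·(1 - T)/(1 - qT)` has derivative zero, because `log_χ'(T) = 1/((1 - T)(1 - qT))`.
As `E` turns sums into products, `E(log_χ X + log_χ Y) = (1 - qX)(1 - qY)/((1 - X)(1 - Y))`, and
`exp_χ = (E - 1)/(E - q)` is a Möbius transformation of `E`, which sends this quotient to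
`G(X,Y)`.
The one-variable case of the same computation is `exp_χ(log_χ(T)) = T`; since `log_χ` has linear
coefficient `1`, `exp_χ` is then its compositional inverse, and
`log_χ(G) = log_χ(exp_χ(log_χ X + log_χ Y)) = log_χ X + log_χ Y`.
-/

noncomputable section

/-- The field `K = ℚ(q)` of rational functions. -/
abbrev K : Type := RatFunc ℚ

/-- The variable `q ∈ ℚ(q)`. -/
noncomputable def q : K := RatFunc.X

/-- `log_χ(T) = Σ_{k ≥ 1} ([k]_q / k) T^k`, where `[k]_q = 1 + q + ⋯ + q^{k-1}`. -/
noncomputable def logChi : PowerSeries K :=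
  PowerSeries.mk fun k => (∑ i ∈ Finset.range k, q ^ i) / (k : K)

/-- `E(T) = exp((1-q)·T)`. -/
noncomputable def E : PowerSeries K := PowerSeries.rescale (1 - q) (PowerSeries.exp K)

/-- `exp_χ(T) = (E(T) - 1) · (E(T) - q)⁻¹`, with `E(T) - q` of constant term
`1 - q ≠ 0`, hence invertible. -/
noncomputable def expChi : PowerSeries K := (E - 1) * (E - PowerSeries.C q)⁻¹

/-- Substitution of a two-variable formal power series `G` with zero constant
term into a one-variable formal power series `f`. -/
noncomputable def substInto (f : PowerSeries K) (G : MvPowerSeries (Fin 2) K) :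
    MvPowerSeries (Fin 2) K :=
  fun d =>
    MvPowerSeries.coeff d
      (∑ k ∈ Finset.range ((d.sum fun _ n => n) + 1),
        MvPowerSeries.C (PowerSeries.coeff k f) * G ^ k)

/-- `G(X,Y) = (X + Y - (1+q)·X·Y) · (1 - q·X·Y)⁻¹`, where `1 - q·X·Y` is a
unit of `K⟦X,Y⟧` since its constant term is `1`. -/
noncomputable def G : MvPowerSeries (Fin 2) K :=
  letI X : MvPowerSeries (Fin 2) K := MvPowerSeries.X 0
  letI Y : MvPowerSeries (Fin 2) K := MvPowerSeries.X 1
  (X + Y - MvPowerSeries.C (1 + q) * X * Y) *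
    MvPowerSeries.invOfUnit (1 - MvPowerSeries.C q * X * Y) 1

namespace PowerSeries

theorem constantCoeff_subst_of_constantCoeff_eq_zero {τ R S : Type*} [CommRing R] [CommRing S]
    [Algebra R S] {a : MvPowerSeries τ S} (ha : MvPowerSeries.constantCoeff a = 0)
    (f : PowerSeries R) :
    MvPowerSeries.constantCoeff (f.subst a) = algebraMap R S (constantCoeff f) := by
  rw [constantCoeff_subst (HasSubst.of_constantCoeff_zero ha), finsum_eq_single _ 0]
  · simp [Algebra.smul_def]
  · intro d hd
    simp [ha, zero_pow hd]

theorem derivative_rescale {R : Type*} [CommRing R] (c : R) (f : PowerSeries R) :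
    d⁄dX R (rescale c f) = C c * rescale c (d⁄dX R f) := by
  ext n
  simp only [coeff_derivative, coeff_rescale, coeff_C_mul]
  ring

variable {A : Type*} [CommRing A] [Algebra ℚ A]

theorem rescale_exp_subst_X_zero_add_X_one (c : A) :
    (rescale c (exp A)).subst (MvPowerSeries.X 0 + MvPowerSeries.X 1 : MvPowerSeries (Fin 2) A) =
      (rescale c (exp A)).subst (MvPowerSeries.X 0 : MvPowerSeries (Fin 2) A) *
        (rescale c (exp A)).subst (MvPowerSeries.X 1 : MvPowerSeries (Fin 2) A) := by
  ext e
  rw [coeff_subst_X_zero_add_X_one, coeff_subst_X_zero_subst_mul_X_one]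
  simp only [coeff_rescale, coeff_exp]
  have key : ((e 0 + e 1).choose (e 0) : ℚ) * (1 / (e 0 + e 1).factorial) =
      1 / (e 0).factorial * (1 / (e 1).factorial) := by
    rw [Nat.choose_symm_add]
    field_simp
    exact_mod_cast Nat.add_choose_mul_factorial_mul_factorial (e 0) (e 1)
  have key' := congrArg (algebraMap ℚ A) key
  rw [map_mul, map_mul, map_natCast] at key'
  linear_combination (c ^ e 0 * c ^ e 1) * key'

theorem rescale_exp_subst_add {σ : Type*} (c : A) {a b : MvPowerSeries σ A} (ha : HasSubst a)
    (hb : HasSubst b) :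
    (rescale c (exp A)).subst (a + b) =
      (rescale c (exp A)).subst a * (rescale c (exp A)).subst b := by
  have hab : MvPowerSeries.HasSubst ![a, b] :=
    MvPowerSeries.hasSubst_of_constantCoeff_nilpotent (Fin.forall_fin_two.mpr ⟨ha, hb⟩)
  have hsubst (f : MvPowerSeries (Fin 2) A) (hf : HasSubst f) (g : PowerSeries A) :
      MvPowerSeries.subst ![a, b] (g.subst f) = g.subst (MvPowerSeries.subst ![a, b] f) :=
    MvPowerSeries.subst_comp_subst_apply hf.const hab g
  have := congrArg (MvPowerSeries.subst ![a, b]) (rescale_exp_subst_X_zero_add_X_one c)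
  rwa [MvPowerSeries.subst_mul hab, hsubst _ ((HasSubst.X 0).add (HasSubst.X 1)),
    hsubst _ (HasSubst.X 0), hsubst _ (HasSubst.X 1), MvPowerSeries.subst_add hab,
    MvPowerSeries.subst_X hab, MvPowerSeries.subst_X hab] at this

end PowerSeries

theorem moebius_transform_eq {S : Type*} [CommRing S] {c e x u v : S} (hc : IsUnit (1 - c))
    (hx : x * (e - c) = e - 1) (he : e * ((1 - u) * (1 - v)) = (1 - c * u) * (1 - c * v)) :
    x * (1 - c * u * v) = u + v - (1 + c) * u * v :=
  hc.mul_left_cancel <| by linear_combination (1 - u) * (1 - v) * hx - (x - 1) * he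

open PowerSeries

lemma one_sub_q_ne_zero : (1 : K) - q ≠ 0 := by
  have : q - 1 = algebraMap (Polynomial ℚ) K (Polynomial.X - Polynomial.C 1) := by simp [q]
  rw [← neg_sub, neg_ne_zero, this]
  exact (map_ne_zero_iff _ (RatFunc.algebraMap_injective ℚ)).mpr (Polynomial.X_sub_C_ne_zero 1)

lemma isUnit_one_sub_q : IsUnit ((1 : K) - q) := isUnit_iff_ne_zero.mpr one_sub_q_ne_zero

lemma constantCoeff_logChi : constantCoeff logChi = 0 := by
  simp [logChi, ← coeff_zero_eq_constantCoeff_apply]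

lemma hasSubst_logChi : HasSubst logChi := HasSubst.of_constantCoeff_zero' constantCoeff_logChi

lemma derivative_logChi : d⁄dX K logChi = mk 1 * rescale q (mk 1) := by
  ext n
  rw [mul_comm, coeff_derivative, coeff_mul, Finset.Nat.sum_antidiagonal_eq_sum_range_succ
    (fun i j => coeff i (rescale q (mk 1)) * coeff j (mk 1 : K⟦X⟧))]
  simp only [logChi, coeff_mk, coeff_rescale, Pi.one_apply, mul_one, Nat.cast_succ]
  exact div_mul_cancel₀ _ (Nat.cast_add_one_ne_zero n)

lemma constantCoeff_E : constantCoeff E = 1 := by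
  simp [E, ← coeff_zero_eq_constantCoeff_apply]

lemma E_subst_logChi_mul_one_sub_X : E.subst logChi * (1 - X) = 1 - C q * X := by
  set h := E.subst logChi with h_def
  set g : K⟦X⟧ := rescale q (mk 1) with g_def
  have hg : g * (1 - C q * X) = 1 := by
    simpa [g_def, rescale_X] using congrArg (rescale q) (mk_one_mul_one_sub_eq_one K)
  have hdg : d⁄dX K g = C q * g ^ 2 := by
    have := congrArg (d⁄dX K) hg
    simp only [Derivation.leibniz, smul_eq_mul, map_sub, Derivation.map_one_eq_zero, derivative_C,
      derivative_X] at this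
    linear_combination g * this - d⁄dX K g * hg
  have hdh : d⁄dX K h = C (1 - q) * h * (mk 1 * g) := by
    rw [h_def, derivative_subst hasSubst_logChi, E, derivative_rescale, derivative_exp,
      derivative_logChi, subst_mul hasSubst_logChi, subst_C]
    rfl
  have hv : h * (1 - X) * g = 1 := by
    refine derivative.ext ?_ ?_
    · simp only [Derivation.leibniz, smul_eq_mul, map_sub, map_one, Derivation.map_one_eq_zero,
        derivative_X, hdg, hdh]
      linear_combination ((1 - C q) * h * g ^ 2) * mk_one_mul_one_sub_eq_one K + (h * g) * hg
    · have hg0 : constantCoeff g = 1 := by simp [g_def, ← coeff_zero_eq_constantCoeff_apply]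
      have hh0 : constantCoeff h = 1 :=
        (constantCoeff_subst_of_constantCoeff_eq_zero constantCoeff_logChi E).trans
          constantCoeff_E
      simp [hg0, hh0]
  linear_combination (1 - C q * X) * hv - h * (1 - X) * hg

lemma constantCoeff_expChi : constantCoeff expChi = 0 := by
  rw [expChi, map_mul, map_sub, constantCoeff_E, map_one, sub_self, zero_mul]

lemma expChi_mul_E_sub_C : expChi * (E - C q) = E - 1 := by
  have hE : constantCoeff (E - C q) ≠ 0 := by
    rw [map_sub, constantCoeff_E, constantCoeff_C]
    exact one_sub_q_ne_zero
  rw [expChi, mul_assoc, PowerSeries.inv_mul_cancel _ hE, mul_one]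

lemma expChi_subst_mul {τ : Type*} {a : MvPowerSeries τ K} (ha : HasSubst a) :
    expChi.subst a * (E.subst a - MvPowerSeries.C q) = E.subst a - 1 := by
  simpa only [map_mul, map_sub, map_one, coe_substAlgHom, subst_C] using
    congrArg (substAlgHom ha) expChi_mul_E_sub_C

lemma expChi_subst_logChi : expChi.subst logChi = X := by
  have hc : IsUnit (1 - C q : K⟦X⟧) := by simpa using isUnit_one_sub_q.map C
  simpa using moebius_transform_eq (v := 0) hc
    (expChi_subst_mul hasSubst_logChi)
    (by simpa using E_subst_logChi_mul_one_sub_X)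

lemma logChi_subst_expChi : logChi.subst expChi = X := by
  have hunit : IsUnit (coeff 1 logChi) := by simp [logChi]
  have hinv := HasSubst.substInvOfIsUnit logChi hunit
  have hexp : expChi = logChi.substInvOfIsUnit hunit := calc
    expChi = subst (logChi.substInvOfIsUnit hunit) (expChi.subst logChi) := by
      rw [subst_comp_subst_apply hasSubst_logChi hinv,
        subst_substInvOfIsUnit_right _ constantCoeff_logChi, X_subst]
    _ = _ := by rw [expChi_subst_logChi, subst_X hinv]
  rw [hexp, subst_substInvOfIsUnit_right _ constantCoeff_logChi]

lemma E_subst_logChi_subst_mul {τ : Type*} {a : MvPowerSeries τ K} (ha : HasSubst a) :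
    E.subst (logChi.subst a) * (1 - a) = 1 - MvPowerSeries.C q * a := by
  have := congrArg (substAlgHom ha) E_subst_logChi_mul_one_sub_X
  simp only [map_mul, map_sub, map_one, coe_substAlgHom, subst_X ha, subst_C] at this
  rwa [subst_comp_subst_apply hasSubst_logChi ha] at this

lemma expChi_subst_logChi_add_logChi :
    expChi.subst (logChi.subst (MvPowerSeries.X 0) + logChi.subst (MvPowerSeries.X 1)) = G := by
  set X₀ : MvPowerSeries (Fin 2) K := MvPowerSeries.X 0
  set X₁ : MvPowerSeries (Fin 2) K := MvPowerSeries.X 1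
  have hlog (i : Fin 2) : HasSubst (logChi.subst (MvPowerSeries.X i : MvPowerSeries (Fin 2) K)) :=
    HasSubst.of_constantCoeff_zero
      (constantCoeff_subst_eq_zero (MvPowerSeries.constantCoeff_X i) _ constantCoeff_logChi)
  have hx := expChi_subst_mul ((hlog 0).add (hlog 1))
  have he : E.subst (logChi.subst X₀ + logChi.subst X₁) * ((1 - X₀) * (1 - X₁)) =
      (1 - MvPowerSeries.C q * X₀) * (1 - MvPowerSeries.C q * X₁) := by
    rw [E, rescale_exp_subst_add _ (hlog 0) (hlog 1), ← E]
    linear_combination (E.subst (logChi.subst X₁) * (1 - X₁)) *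
        E_subst_logChi_subst_mul (HasSubst.X (0 : Fin 2)) +
      (1 - MvPowerSeries.C q * X₀) * E_subst_logChi_subst_mul (HasSubst.X (1 : Fin 2))
  have hc : IsUnit (1 - MvPowerSeries.C q : MvPowerSeries (Fin 2) K) := by
    simpa using isUnit_one_sub_q.map MvPowerSeries.C
  have hw : (1 - MvPowerSeries.C q * X₀ * X₁) *
      MvPowerSeries.invOfUnit (1 - MvPowerSeries.C q * X₀ * X₁) 1 = 1 :=
    MvPowerSeries.mul_invOfUnit _ _ (by simp [X₀])
  calc _ = _ * ((1 - MvPowerSeries.C q * X₀ * X₁) *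
        MvPowerSeries.invOfUnit (1 - MvPowerSeries.C q * X₀ * X₁) 1) := by rw [hw, mul_one]
    _ = G := by rw [← mul_assoc, moebius_transform_eq hc hx he, ← map_one MvPowerSeries.C,
          ← map_add]; rfl

lemma substInto_eq_subst {a : MvPowerSeries (Fin 2) K} (ha : MvPowerSeries.constantCoeff a = 0)
    (f : K⟦X⟧) : substInto f a = f.subst a := by
  ext d
  rw [coeff_subst (HasSubst.of_constantCoeff_zero ha), finsum_eq_sum_of_support_subset _
    (s := Finset.range (d.degree + 1))]
  · change MvPowerSeries.coeff d
      (∑ k ∈ Finset.range (d.degree + 1), MvPowerSeries.C (coeff k f) * a ^ k) = _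
    simp only [map_sum, MvPowerSeries.coeff_C_mul, smul_eq_mul]
  · intro k hk
    rw [Finset.mem_coe, Finset.mem_range]
    by_contra! hdk
    have hlt : (d.degree : ℕ∞) < k := by exact_mod_cast hdk
    exact hk (by simp only [MvPowerSeries.coeff_of_lt_order
      (hlt.trans_le (MvPowerSeries.le_order_pow_of_constantCoeff_eq_zero k ha)), smul_zero])

/-- `exp_χ(log_χ(X) + log_χ(Y)) = G(X,Y)` in `K⟦X,Y⟧`; equivalently,
`log_χ(G(X,Y)) = log_χ(X) + log_χ(Y)`, i.e. `log_χ` is a logarithm for the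
formal group law `G`. -/
theorem stmt7 :
    substInto expChi
        (substInto logChi (MvPowerSeries.X 0) + substInto logChi (MvPowerSeries.X 1)) =
      G ∧
    substInto logChi G =
      substInto logChi (MvPowerSeries.X 0) + substInto logChi (MvPowerSeries.X 1) := by
  simp only [substInto_eq_subst (MvPowerSeries.constantCoeff_X _)]
  set L := logChi.subst (MvPowerSeries.X 0 : MvPowerSeries (Fin 2) K) +
    logChi.subst (MvPowerSeries.X 1 : MvPowerSeries (Fin 2) K)
  have hL : MvPowerSeries.constantCoeff L = 0 := by
    simp [L, constantCoeff_subst_eq_zero, constantCoeff_logChi]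
  have hG : expChi.subst L = G := expChi_subst_logChi_add_logChi
  refine ⟨(substInto_eq_subst hL _).trans hG, ?_⟩
  rw [← hG, substInto_eq_subst (constantCoeff_subst_eq_zero hL _ constantCoeff_expChi),
    ← subst_comp_subst_apply (HasSubst.of_constantCoeff_zero' constantCoeff_expChi)
      (HasSubst.of_constantCoeff_zero hL), logChi_subst_expChi,
    subst_X (HasSubst.of_constantCoeff_zero hL)]

end
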